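/- arXiv:2402.03160 — 5 statements merged into one kernel-verified Lean document; each statement's English description precedes it below -/
import Mathlib

section
/- Let ξ₁ = ((1,1,1,0),(1,1,1,0)), ξ₂ = ((1,0,1,0),(0,0,1,0)), ξ₃ = ((1,1,1,0),(0,0,1,0)), ξ₄ = ((1,0,1,0),(0,1,1,0)), ξ₅ = ((0,1,1,0),(0,1,0,0)) in 𝔽₂^4 × 𝔽₂^4. Then each ξⱼ is odd, and the system ξ₁, …, ξ₅ is azygetic and essentially independent. -/
/-!
With `e(c, d) = q(c + d) + q(c) + q(d)` the symplectic form on characteristics, a triple is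
azygetic iff `e(c₁, c₂ + c₃) + e(c₂, c₃) = 1`. Suppose the members of an azygetic system
indexed by a nonempty set `s` of even size sum to `0`, and pick `j ∈ s` and `k ∉ s`
(possible when the system has odd length, such as 5). Pairing the sum with `c_j + c_k`,
each of the odd number of `i ∈ s ∖ {j}` contributes `1 + e(c_j, c_k)` and `j` contributes
`e(c_j, c_k)`, so `0 = 1`. Hence azygetic systems of odd length are essentially independent,
and what remains about `ξ` is a finite check of oddness and azygeticity.
-/

/-- Theta characteristics for genus `g`, identified with pairs `(a, b) ∈ 𝔽₂^g × 𝔽₂^g`,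
added componentwise. -/
abbrev ThetaChar (g : ℕ) := (Fin g → ZMod 2) × (Fin g → ZMod 2)

/-- The parity form `q(c) = a · b = ∑ᵢ aᵢ bᵢ ∈ 𝔽₂`. -/
def qform {g : ℕ} (c : ThetaChar g) : ZMod 2 := ∑ i, c.1 i * c.2 i

/-- A characteristic is odd if `q(c) = 1`. -/
def IsOddChar {g : ℕ} (c : ThetaChar g) : Prop := qform c = 1

/-- A characteristic is even if `q(c) = 0`. -/
def IsEvenChar {g : ℕ} (c : ThetaChar g) : Prop := qform c = 0

/-- A triple `c₁, c₂, c₃` is azygetic if `q(c₁+c₂+c₃) + q(c₁) + q(c₂) + q(c₃) = 1`. -/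
def AzyTriple {g : ℕ} (c₁ c₂ c₃ : ThetaChar g) : Prop :=
  qform (c₁ + c₂ + c₃) + qform c₁ + qform c₂ + qform c₃ = 1

/-- An indexed system is azygetic if every triple of members with three distinct
indices is an azygetic triple. -/
def AzySystem {g n : ℕ} (c : Fin n → ThetaChar g) : Prop :=
  ∀ i j k : Fin n, i ≠ j → j ≠ k → i ≠ k → AzyTriple (c i) (c j) (c k)

/-- A system is essentially independent if every sum over a nonempty index subset of
even cardinality is nonzero. -/
def EssInd {g n : ℕ} (c : Fin n → ThetaChar g) : Prop :=
  ∀ s : Finset (Fin n), s.Nonempty → Even s.card → ∑ i ∈ s, c i ≠ 0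

/-- The explicit odd characteristics `ξ₁, …, ξ₅` from the proof of Lemma 3.1. -/
def ξ : Fin 5 → ThetaChar 4 :=
  ![(![1, 1, 1, 0], ![1, 1, 1, 0]),
    (![1, 0, 1, 0], ![0, 0, 1, 0]),
    (![1, 1, 1, 0], ![0, 0, 1, 0]),
    (![1, 0, 1, 0], ![0, 1, 1, 0]),
    (![0, 1, 1, 0], ![0, 1, 0, 0])]

def symplecticForm {g : ℕ} (c d : ThetaChar g) : ZMod 2 := ∑ i, (c.1 i * d.2 i + d.1 i * c.2 i)

section
variable {g : ℕ}

theorem qform_add (c d : ThetaChar g) :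
    qform (c + d) = qform c + qform d + symplecticForm c d := by
  simp only [qform, symplecticForm, Prod.fst_add, Prod.snd_add, Pi.add_apply,
    ← Finset.sum_add_distrib]
  exact Finset.sum_congr rfl fun _ _ => by ring

theorem symplecticForm_self (c : ThetaChar g) : symplecticForm c c = 0 :=
  Finset.sum_eq_zero fun _ _ => CharTwo.add_self_eq_zero _

theorem symplecticForm_zero_left (d : ThetaChar g) : symplecticForm 0 d = 0 := by
  simp [symplecticForm]

theorem symplecticForm_add_left (c c' d : ThetaChar g) :
    symplecticForm (c + c') d = symplecticForm c d + symplecticForm c' d := by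
  simp only [symplecticForm, Prod.fst_add, Prod.snd_add, Pi.add_apply, ← Finset.sum_add_distrib]
  exact Finset.sum_congr rfl fun _ _ => by ring

theorem symplecticForm_add_right (c d d' : ThetaChar g) :
    symplecticForm c (d + d') = symplecticForm c d + symplecticForm c d' := by
  simp only [symplecticForm, Prod.fst_add, Prod.snd_add, Pi.add_apply, ← Finset.sum_add_distrib]
  exact Finset.sum_congr rfl fun _ _ => by ring

theorem symplecticForm_sum_left {ι : Type*} (s : Finset ι) (c : ι → ThetaChar g)
    (d : ThetaChar g) :
    symplecticForm (∑ i ∈ s, c i) d = ∑ i ∈ s, symplecticForm (c i) d := by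
  simp only [symplecticForm, Prod.fst_sum, Prod.snd_sum, Finset.sum_apply, Finset.sum_mul,
    Finset.mul_sum, Finset.sum_add_distrib]
  rw [Finset.sum_comm (s := s), Finset.sum_comm (s := s) (t := Finset.univ)]

theorem azyTriple_iff (c₁ c₂ c₃ : ThetaChar g) :
    AzyTriple c₁ c₂ c₃ ↔
      symplecticForm c₁ (c₂ + c₃) + symplecticForm c₂ c₃ = 1 := by
  rw [AzyTriple, qform_add, qform_add, symplecticForm_add_left, symplecticForm_add_right]
  congr! 1
  ring_nf
  reduce_mod_char

variable {n : ℕ} {c : Fin n → ThetaChar g}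

theorem AzySystem.sum_ne_zero (h : AzySystem c) {s : Finset (Fin n)} (hs : s.Nonempty)
    (heven : Even s.card) {k : Fin n} (hk : k ∉ s) : ∑ i ∈ s, c i ≠ 0 := by
  obtain ⟨j, hj⟩ := hs
  intro hsum
  have hjk : j ≠ k := fun hjk => hk (hjk ▸ hj)
  have hodd : Odd (s.erase j).card := by
    rw [Finset.card_erase_of_mem hj]
    exact Nat.Even.sub_odd (Finset.card_pos.2 ⟨j, hj⟩) heven odd_one
  have hpair : ∀ i ∈ s.erase j,
      symplecticForm (c i) (c j + c k) = 1 + symplecticForm (c j) (c k) := by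
    intro i hi
    have hij := Finset.ne_of_mem_erase hi
    have hik : i ≠ k := fun hik => hk (hik ▸ Finset.mem_of_mem_erase hi)
    rw [eq_sub_of_add_eq ((azyTriple_iff _ _ _).1 (h i j k hij hjk hik)), sub_eq_add_neg,
      ZMod.neg_eq_self_mod_two]
  refine zero_ne_one (α := ZMod 2) ?_
  calc
    (0 : ZMod 2) = symplecticForm (∑ i ∈ s, c i) (c j + c k) := by
      rw [hsum, symplecticForm_zero_left]
    _ = ∑ i ∈ s.erase j, symplecticForm (c i) (c j + c k)
          + symplecticForm (c j) (c j + c k) := by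
      rw [symplecticForm_sum_left, Finset.sum_erase_add _ _ hj]
    _ = (s.erase j).card * (1 + symplecticForm (c j) (c k)) + symplecticForm (c j) (c k) := by
      rw [Finset.sum_congr rfl hpair, Finset.sum_const, nsmul_eq_mul, symplecticForm_add_right,
        symplecticForm_self, zero_add]
    _ = 1 := by
      rw [ZMod.natCast_eq_one_iff_odd.2 hodd, one_mul, add_assoc, CharTwo.add_self_eq_zero,
        add_zero]

theorem AzySystem.essInd (h : AzySystem c) (hn : Odd n) : EssInd c := by
  intro s hs heven
  obtain ⟨k, hk⟩ : ∃ k, k ∉ s := by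
    by_contra! hall
    rw [Finset.eq_univ_of_forall hall, Finset.card_univ, Fintype.card_fin] at heven
    exact Nat.not_even_iff_odd.2 hn heven
  exact h.sum_ne_zero hs heven hk

end

/-- Each `ξⱼ` is odd, and the system `ξ₁, …, ξ₅` is azygetic and essentially
independent. -/
theorem xi_odd_azygetic_essentially_independent :
    (∀ j, IsOddChar (ξ j)) ∧ AzySystem ξ ∧ EssInd ξ := by
  have hazy : AzySystem ξ := by
    unfold AzySystem AzyTriple
    decide
  exact ⟨by unfold IsOddChar; decide, hazy, hazy.essInd (by decide)⟩
end

section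
/- Let k be a field, R = k[x₀,x₁,x₂,x₃] the polynomial ring in four variables, U a k-submodule of R, and Q ∈ U a nonzero element. Let S denote the k-vector space of symmetric 3×3 matrices over k, and let φ : U → S be a k-linear map whose kernel is the line k·Q spanned by Q. Let ψ, ψ̃ : S → U be k-linear right inverses of φ, i.e., φ(ψ(A)) = A and φ(ψ̃(A)) = A for all A ∈ S. Define 3×3 matrices B and B̃ with entries in R by B_{ij} = ψ(E_{ij} + E_{ji}) and B̃_{ij} = ψ̃(E_{ij} + E_{ji}), where E_{ij} is the standard basis matrix with 1 in position (i,j) and 0 elsewhere. Then Q divides det(B) − det(B̃) in R. (This is the algebraic content of the lemma G ≡ G̃ mod Q: the sextic forms built from any two right inverses of φ agree modulo the quadric Q.) -/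
open Matrix

/-- The `k`-vector space of symmetric `3 × 3` matrices over `k`, as a submodule of the
space of all `3 × 3` matrices. -/
def symMatrices (k : Type*) [Field k] : Submodule k (Matrix (Fin 3) (Fin 3) k) where
  carrier := {A | Aᵀ = A}
  add_mem' := by
    intro a b ha hb
    show (a + b)ᵀ = a + b
    rw [Matrix.transpose_add, ha, hb]
  zero_mem' := by
    show (0 : Matrix (Fin 3) (Fin 3) k)ᵀ = 0
    simp
  smul_mem' := by
    intro c a ha
    show (c • a)ᵀ = c • a
    rw [Matrix.transpose_smul, ha]

/-- `E_{ij} + E_{ji}` is a symmetric matrix. -/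
lemma stdBasis_add_mem_symMatrices (k : Type*) [Field k] (i j : Fin 3) :
    Matrix.single i j (1 : k) + Matrix.single j i (1 : k) ∈
      symMatrices k := by
  show _ᵀ = _
  ext a b
  simp only [Matrix.transpose_apply, Matrix.add_apply, Matrix.single,
    Matrix.of_apply]
  by_cases hi : i = a <;> by_cases hj : j = b <;>
    by_cases hi' : j = a <;> by_cases hj' : i = b <;>
    simp_all

/-- Let `R = k[x₀,…,x₃]`, `U ⊆ R` a subspace, `Q ∈ U` nonzero, and
`φ : U → S` a linear map to the space of symmetric `3 × 3` matrices over `k` whose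
kernel is the line spanned by `Q`. If `ψ, ψ̃` are two linear right inverses of `φ`, and
`B, B̃` are the `3 × 3` matrices over `R` with entries `B_{ij} = ψ(E_{ij} + E_{ji})`,
`B̃_{ij} = ψ̃(E_{ij} + E_{ji})`, then `Q ∣ det B - det B̃` in `R`. -/
theorem det_sub_det_dvd (k : Type*) [Field k]
    (U : Submodule k (MvPolynomial (Fin 4) k))
    (Q : MvPolynomial (Fin 4) k) (hQU : Q ∈ U) (hQ : Q ≠ 0)
    (φ : U →ₗ[k] symMatrices k)
    (hker : LinearMap.ker φ = Submodule.span k {(⟨Q, hQU⟩ : U)})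
    (ψ ψ' : symMatrices k →ₗ[k] U)
    (hψ : ∀ A, φ (ψ A) = A) (hψ' : ∀ A, φ (ψ' A) = A) :
    Q ∣ Matrix.det (Matrix.of fun i j : Fin 3 =>
          (ψ ⟨Matrix.single i j (1 : k) + Matrix.single j i (1 : k),
              stdBasis_add_mem_symMatrices k i j⟩ : MvPolynomial (Fin 4) k)) -
        Matrix.det (Matrix.of fun i j : Fin 3 =>
          (ψ' ⟨Matrix.single i j (1 : k) + Matrix.single j i (1 : k),
              stdBasis_add_mem_symMatrices k i j⟩ : MvPolynomial (Fin 4) k)) := by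
  have key : ∀ A : symMatrices k,
      Ideal.Quotient.mk (Ideal.span {Q}) (ψ A : MvPolynomial (Fin 4) k) =
      Ideal.Quotient.mk (Ideal.span {Q}) (ψ' A : MvPolynomial (Fin 4) k) := by
    intro A
    have hmem : ψ A - ψ' A ∈ LinearMap.ker φ := by
      simp [LinearMap.mem_ker, hψ, hψ']
    rw [hker, Submodule.mem_span_singleton] at hmem
    obtain ⟨c, hc⟩ := hmem
    have hR : (ψ A : MvPolynomial (Fin 4) k) - (ψ' A : MvPolynomial (Fin 4) k)
        = MvPolynomial.C c * Q := by
      have := congrArg (Subtype.val) hc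
      simpa [MvPolynomial.smul_eq_C_mul] using this.symm
    rw [← sub_eq_zero, ← RingHom.map_sub, hR]
    exact Ideal.Quotient.eq_zero_iff_mem.mpr
      (Ideal.mul_mem_left _ _ (Ideal.subset_span rfl))
  rw [← Ideal.mem_span_singleton, ← Ideal.Quotient.eq_zero_iff_mem, RingHom.map_sub,
    RingHom.map_det, RingHom.map_det, sub_eq_zero]
  congr 1
  ext i j
  simpa using key _
end

section
/- Let M be the 10×18 matrix over 𝔽₃₇ whose rows are: (33,14,34,34,33,11,0,0,0,0,0,0,0,0,0,0,0,0), (0,0,0,0,0,0,9,3,23,28,10,26,0,0,0,0,0,0), (0,0,0,0,0,0,0,0,0,0,0,0,1,2,2,1,2,1), (19,22,6,20,21,18,2,14,24,6,10,35,10,33,9,30,13,27), (29,14,35,17,11,23,19,13,14,29,34,24,31,29,17,22,36,8), (11,21,11,26,29,12,10,9,10,27,23,21,4,11,4,33,24,1), (26,3,24,4,27,34,35,14,1,31,15,23,36,7,19,34,26,30), (21,0,0,0,0,0,22,0,0,0,0,0,29,0,0,0,0,0), (4,35,33,28,1,1,21,8,16,36,33,33,32,21,5,2,8,8), (8,1,34,22,16,13,1,14,32,12,2,34,7,24,2,10,14,16).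 Then the left kernel {Λ ∈ 𝔽₃₇^{10} : Λ·M = 0} is a one-dimensional 𝔽₃₇-subspace, spanned by the vector (1,21,13,32,8,33,17,3,19,18). -/
/-!
Over `𝔽₃₇` one checks by direct computation that `v = (1,21,13,32,8,33,17,3,19,18)` satisfies
`v · M = 0`, and that an explicit `18 × 10` matrix `C` (read off from Gaussian elimination on
the columns `0,…,7,12` of `M`) satisfies `M C + e₀ v = 1`. Multiplying the latter on the left by
any `Λ` with `Λ · M = 0` gives `Λ = Λ₀ v`, so the left kernel is the line through `v`.
-/

/-- The `10 × 18` matrix over `𝔽₃₇` encoding the linear system `Λ · M = 0` for the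
unknown scalars `Λ = (λ₁, …, λ₁₀)`. -/
def M : Matrix (Fin 10) (Fin 18) (ZMod 37) :=
  !![33,14,34,34,33,11,0,0,0,0,0,0,0,0,0,0,0,0;
     0,0,0,0,0,0,9,3,23,28,10,26,0,0,0,0,0,0;
     0,0,0,0,0,0,0,0,0,0,0,0,1,2,2,1,2,1;
     19,22,6,20,21,18,2,14,24,6,10,35,10,33,9,30,13,27;
     29,14,35,17,11,23,19,13,14,29,34,24,31,29,17,22,36,8;
     11,21,11,26,29,12,10,9,10,27,23,21,4,11,4,33,24,1;
     26,3,24,4,27,34,35,14,1,31,15,23,36,7,19,34,26,30;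
     21,0,0,0,0,0,22,0,0,0,0,0,29,0,0,0,0,0;
     4,35,33,28,1,1,21,8,16,36,33,33,32,21,5,2,8,8;
     8,1,34,22,16,13,1,14,32,12,2,34,7,24,2,10,14,16]

namespace Matrix

variable {R m n : Type*} [CommSemiring R] [Fintype m] [Fintype n] [DecidableEq m]

theorem eq_smul_of_vecMul_eq_zero {A : Matrix m n R} {C : Matrix n m R} {v : m → R} {i : m}
    (hC : A * C + vecMulVec (Pi.single i 1) v = 1) {x : m → R} (hx : x ᵥ* A = 0) :
    x = x i • v :=
  calc x = x ᵥ* (A * C + vecMulVec (Pi.single i 1) v) := by rw [hC, vecMul_one]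
    _ = x i • v := by
      rw [vecMul_add, ← vecMul_vecMul, hx, zero_vecMul, zero_add, vecMul_vecMulVec,
        dotProduct_single_one]

theorem ker_vecMulLinear_eq_span_singleton {A : Matrix m n R} {C : Matrix n m R}
    {v : m → R} {i : m} (hC : A * C + vecMulVec (Pi.single i 1) v = 1) (hv : v ᵥ* A = 0) :
    LinearMap.ker A.vecMulLinear = Submodule.span R {v} := by
  refine le_antisymm (fun x hx => ?_) ?_
  · exact Submodule.mem_span_singleton.2 ⟨x i, (eq_smul_of_vecMul_eq_zero hC hx).symm⟩
  · rw [Submodule.span_singleton_le_iff_mem]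
    exact hv

end Matrix

open Matrix

def kernelGenerator : Fin 10 → ZMod 37 := ![1, 21, 13, 32, 8, 33, 17, 3, 19, 18]

def kernelCertificate : Matrix (Fin 18) (Fin 10) (ZMod 37) :=
  !![0,21,8,2,5,1,25,36,17,9;
     0,31,31,15,31,32,5,27,4,1;
     0,31,15,9,8,29,27,34,23,8;
     0,33,34,19,12,8,16,25,23,21;
     0,4,32,6,25,13,26,15,7,32;
     0,2,31,2,30,32,19,0,1,30;
     0,22,23,25,7,31,35,1,9,20;
     0,33,5,36,16,18,6,34,10,14;
     0,0,0,0,0,0,0,0,0,0;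
     0,0,0,0,0,0,0,0,0,0;
     0,0,0,0,0,0,0,0,0,0;
     0,0,0,0,0,0,0,0,0,0;
     0,0,1,0,0,0,0,0,0,0;
     0,0,0,0,0,0,0,0,0,0;
     0,0,0,0,0,0,0,0,0,0;
     0,0,0,0,0,0,0,0,0,0;
     0,0,0,0,0,0,0,0,0,0;
     0,0,0,0,0,0,0,0,0,0]

theorem M_mul_kernelCertificate_add :
    M * kernelCertificate + vecMulVec (Pi.single 0 1) kernelGenerator = 1 := by
  decide

theorem kernelGenerator_vecMul_M : kernelGenerator ᵥ* M = 0 := by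
  decide

theorem kernelGenerator_ne_zero : kernelGenerator ≠ 0 := by
  decide

/-- The left kernel `{Λ ∈ 𝔽₃₇^10 : Λ · M = 0}` of `M` is the one-dimensional
subspace spanned by `(1,21,13,32,8,33,17,3,19,18)`. -/
theorem left_kernel_spanned :
    Module.finrank (ZMod 37) (LinearMap.ker (Matrix.vecMulLinear M)) = 1 ∧
    LinearMap.ker (Matrix.vecMulLinear M) =
      Submodule.span (ZMod 37)
        {![1, 21, 13, 32, 8, 33, 17, 3, 19, 18]} := by
  have hker : LinearMap.ker M.vecMulLinear = Submodule.span (ZMod 37) {kernelGenerator} :=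
    ker_vecMulLinear_eq_span_singleton M_mul_kernelCertificate_add kernelGenerator_vecMul_M
  have : Fact (Nat.Prime 37) := ⟨by norm_num⟩
  exact ⟨hker ▸ finrank_span_singleton kernelGenerator_ne_zero, hker⟩
end

section
/- For g = 4: for every azygetic, essentially independent system m₁, m₂, m₃, m₄ of odd theta characteristics in 𝔽₂^4 × 𝔽₂^4, there are exactly 2 sets N = {n₁, …, n₆} of six even characteristics such that m₁, …, m₄, n₁, …, n₆ is a special fundamental system. (This is the entry '2' for g = 4 in the table of the number of terms on the right-hand side of Fay's generalized Jacobi derivative identity.) -/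
/-- The combined system `m₁, …, mₙ, n₁, …` (with `n`'s the elements of the finite set
`N`) is azygetic: every triple of members in distinct positions is azygetic. -/
def FullyAzygetic {g n : ℕ} (m : Fin n → ThetaChar g) (N : Finset (ThetaChar g)) :
    Prop :=
  AzySystem m ∧
  (∀ i j : Fin n, i ≠ j → ∀ c ∈ N, AzyTriple (m i) (m j) c) ∧
  (∀ i : Fin n, ∀ c ∈ N, ∀ c' ∈ N, c ≠ c' → AzyTriple (m i) c c') ∧
  (∀ c ∈ N, ∀ c' ∈ N, ∀ c'' ∈ N, c ≠ c' → c' ≠ c'' → c ≠ c'' → AzyTriple c c' c'')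

/-!
Call a permutation `τ` of `𝔽₂⁸` a parity automorphism if `q ∘ τ = q` and `τ` is affine, i.e.
`τ (a + b + c) = τ a + τ b + τ c`. Such maps preserve parity and azygetic triples, so they carry
the completions of `m` bijectively onto those of `τ ∘ m`. For every `u` the map sending `c` to
`c + u` when `q (c + u) = q c` and fixing it otherwise is one; for `x, y` of equal parity the map
for `u = x + y` sends `x` to `y` and fixes every `f` for which `f, x, y` is azygetic. Composing
pairs of these, an azygetic system of four odd characteristics can be moved, one member at a time,
onto a fixed one. For that one only twelve even characteristics are admissible, and they split
into two sets of six such that no azygetic triple of them meets both; these two sets are the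
completions.
-/

section ParityAutomorphisms

variable {g : ℕ}

/-- `apply_add_add` says that `τ` is affine over `𝔽₂`. -/
structure IsParityAut (τ : Equiv.Perm (ThetaChar g)) : Prop where
  qform_apply (c : ThetaChar g) : qform (τ c) = qform c
  apply_add_add (a b c : ThetaChar g) : τ (a + b + c) = τ a + τ b + τ c

namespace IsParityAut

lemma one : IsParityAut (1 : Equiv.Perm (ThetaChar g)) := ⟨fun _ => rfl, fun _ _ _ => rfl⟩

lemma mul {σ τ : Equiv.Perm (ThetaChar g)} (hσ : IsParityAut σ) (hτ : IsParityAut τ) :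
    IsParityAut (σ * τ) :=
  ⟨fun c => (hσ.qform_apply _).trans (hτ.qform_apply c),
    fun a b c => by simp only [Equiv.Perm.mul_apply, hτ.apply_add_add, hσ.apply_add_add]⟩

variable {τ : Equiv.Perm (ThetaChar g)} (hτ : IsParityAut τ)
include hτ

lemma azyTriple_apply_iff (a b c : ThetaChar g) :
    AzyTriple (τ a) (τ b) (τ c) ↔ AzyTriple a b c := by
  simp only [AzyTriple, ← hτ.apply_add_add, hτ.qform_apply]

lemma isEvenChar_apply_iff (c : ThetaChar g) : IsEvenChar (τ c) ↔ IsEvenChar c := by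
  simp only [IsEvenChar, hτ.qform_apply]

end IsParityAut

lemma qform_add_add_add_add (a b c u : ThetaChar g) :
    qform (a + b + c + u) + qform (a + b + c) =
      qform (a + u) + qform a + (qform (b + u) + qform b) + (qform (c + u) + qform c) := by
  simp only [qform, Prod.fst_add, Prod.snd_add, Pi.add_apply, ← Finset.sum_add_distrib]
  refine Finset.sum_congr rfl fun i _ => ?_
  generalize a.1 i = a₁, a.2 i = a₂, b.1 i = b₁, b.2 i = b₂, c.1 i = c₁, c.2 i = c₂,
    u.1 i = u₁, u.2 i = u₂
  revert a₁ a₂ b₁ b₂ c₁ c₂ u₁ u₂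
  decide

/-- Translation by `u` where it keeps the parity, the identity elsewhere: the coefficient of `u`
is `1` exactly when `qform (c + u) = qform c`. -/
def reflect (u c : ThetaChar g) : ThetaChar g := c + (qform (c + u) + qform c + 1) • u

lemma reflect_of_qform_eq {u c : ThetaChar g} (h : qform (c + u) = qform c) :
    reflect u c = c + u := by
  rw [reflect, h, CharTwo.add_self_eq_zero, zero_add, one_smul]

lemma reflect_of_qform_ne {u c : ThetaChar g} (h : qform (c + u) ≠ qform c) :
    reflect u c = c := by
  have h1 : qform (c + u) + qform c = 1 := by
    generalize qform (c + u) = x, qform c = y at h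
    revert x y
    decide
  rw [reflect, h1, CharTwo.add_self_eq_zero, zero_smul, add_zero]

lemma qform_reflect (u c : ThetaChar g) : qform (reflect u c) = qform c := by
  by_cases h : qform (c + u) = qform c
  · rw [reflect_of_qform_eq h, h]
  · rw [reflect_of_qform_ne h]

lemma reflect_reflect (u c : ThetaChar g) : reflect u (reflect u c) = c := by
  by_cases h : qform (c + u) = qform c
  · have h' : qform (c + u + u) = qform (c + u) := by
      rw [add_assoc, ZModModule.add_self, add_zero, h]
    rw [reflect_of_qform_eq h, reflect_of_qform_eq h', add_assoc, ZModModule.add_self, add_zero]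
  · rw [reflect_of_qform_ne h, reflect_of_qform_ne h]

lemma reflect_add_add (u a b c : ThetaChar g) :
    reflect u (a + b + c) = reflect u a + reflect u b + reflect u c := by
  have key : qform (a + b + c + u) + qform (a + b + c) + 1 =
      (qform (a + u) + qform a + 1) + (qform (b + u) + qform b + 1) +
        (qform (c + u) + qform c + 1) := by
    rw [qform_add_add_add_add]; ring_nf; reduce_mod_char
  rw [reflect, key, add_smul, add_smul, reflect, reflect, reflect]
  abel

def reflectPerm (u : ThetaChar g) : Equiv.Perm (ThetaChar g) :=
  Function.Involutive.toPerm (reflect u) (reflect_reflect u)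

@[simp]
lemma reflectPerm_apply (u c : ThetaChar g) : reflectPerm u c = reflect u c := rfl

lemma isParityAut_reflectPerm (u : ThetaChar g) : IsParityAut (reflectPerm u) :=
  ⟨qform_reflect u, reflect_add_add u⟩

lemma reflect_add_self {x y : ThetaChar g} (h : qform x = qform y) : reflect (x + y) x = y := by
  rw [reflect_of_qform_eq (by rw [← add_assoc, ZModModule.add_self, zero_add, h]), ← add_assoc,
    ZModModule.add_self, zero_add]

lemma reflect_add_of_azyTriple {f x y : ThetaChar g} (h : qform x = qform y)
    (hf : AzyTriple f x y) : reflect (x + y) f = f := by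
  refine reflect_of_qform_ne fun hq => ?_
  rw [AzyTriple, add_assoc f, hq, h] at hf
  ring_nf at hf
  reduce_mod_char at hf
  exact zero_ne_one hf

lemma exists_isParityAut_apply_eq {F : Set (ThetaChar g)} {x w y : ThetaChar g}
    (hxw : qform x = qform w) (hwy : qform w = qform y)
    (hFxw : ∀ f ∈ F, AzyTriple f x w) (hFwy : ∀ f ∈ F, AzyTriple f w y) :
    ∃ σ, IsParityAut σ ∧ σ x = y ∧ ∀ f ∈ F, σ f = f := by
  refine ⟨reflectPerm (w + y) * reflectPerm (x + w),
    (isParityAut_reflectPerm _).mul (isParityAut_reflectPerm _), ?_, fun f hf => ?_⟩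
  · simp only [Equiv.Perm.mul_apply, reflectPerm_apply, reflect_add_self hxw, reflect_add_self hwy]
  · simp only [Equiv.Perm.mul_apply, reflectPerm_apply, reflect_add_of_azyTriple hxw (hFxw f hf),
      reflect_add_of_azyTriple hwy (hFwy f hf)]

end ParityAutomorphisms

section Completions

variable {g n : ℕ}

lemma not_azyTriple_self_left (a c : ThetaChar g) : ¬AzyTriple a a c := by
  rw [AzyTriple, ZModModule.add_self, zero_add]
  ring_nf
  reduce_mod_char
  exact zero_ne_one

lemma AzySystem.injective {c : Fin n → ThetaChar g} (h : AzySystem c) (hn : 2 < n) :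
    Function.Injective c := by
  intro i j hij
  by_contra hne
  obtain ⟨k, hki, hkj⟩ := Fin.exists_ne_and_ne_of_two_lt i j hn
  exact not_azyTriple_self_left (c j) (c k) (hij ▸ h i j k hne hkj.symm hki.symm)

def completions (m : Fin n → ThetaChar g) (k : ℕ) : Set (Finset (ThetaChar g)) :=
  {N | N.card = k ∧ (∀ c ∈ N, IsEvenChar c) ∧ FullyAzygetic m N}

namespace IsParityAut

variable {τ : Equiv.Perm (ThetaChar g)} (hτ : IsParityAut τ)
include hτ

lemma fullyAzygetic_map_iff (m : Fin n → ThetaChar g) (N : Finset (ThetaChar g)) :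
    FullyAzygetic (τ ∘ m) (N.map τ.toEmbedding) ↔ FullyAzygetic m N := by
  simp only [FullyAzygetic, AzySystem, Function.comp_apply, Finset.forall_mem_map,
    Equiv.coe_toEmbedding, τ.injective.ne_iff, hτ.azyTriple_apply_iff]

lemma map_mem_completions_iff (m : Fin n → ThetaChar g) (k : ℕ) (N : Finset (ThetaChar g)) :
    N.map τ.toEmbedding ∈ completions (τ ∘ m) k ↔ N ∈ completions m k := by
  simp only [completions, Set.mem_ofPred_eq, Finset.card_map, Finset.forall_mem_map,
    Equiv.coe_toEmbedding, hτ.isEvenChar_apply_iff, hτ.fullyAzygetic_map_iff]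

lemma ncard_completions_comp (m : Fin n → ThetaChar g) (k : ℕ) :
    (completions (τ ∘ m) k).ncard = (completions m k).ncard := by
  have h : completions m k = τ.finsetCongr ⁻¹' completions (τ ∘ m) k := by
    ext N
    exact (hτ.map_mem_completions_iff m k N).symm
  rw [h, Set.ncard_preimage_of_injective_subset_range τ.finsetCongr.injective
    (by simp [τ.finsetCongr.surjective.range_eq])]

end IsParityAut

end Completions

section Decidable

variable {g n : ℕ}

instance (c : ThetaChar g) : Decidable (IsOddChar c) := inferInstanceAs (Decidable (_ = _))

instance (c : ThetaChar g) : Decidable (IsEvenChar c) := inferInstanceAs (Decidable (_ = _))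

instance (a b c : ThetaChar g) : Decidable (AzyTriple a b c) := inferInstanceAs (Decidable (_ = _))

instance (c : Fin n → ThetaChar g) : Decidable (AzySystem c) :=
  inferInstanceAs (Decidable (∀ _ _ _, _ → _ → _ → _))

end Decidable

section GenusFour

def canonicalOdd : Fin 4 → ThetaChar 4 :=
  ![(![1, 0, 0, 0], ![1, 0, 0, 0]), (![1, 1, 0, 0], ![1, 0, 0, 0]),
    (![0, 1, 0, 0], ![0, 1, 0, 0]), (![1, 1, 0, 0], ![0, 1, 0, 0])]

lemma isOddChar_canonicalOdd : ∀ i, IsOddChar (canonicalOdd i) := by decide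

set_option synthInstance.maxSize 1000 in
/-- Any odd `x` that can follow `canonicalOdd 0, …, canonicalOdd (k - 1)` in an azygetic system
is joined to `canonicalOdd k` by two reflections fixing those `k` characteristics. -/
lemma exists_odd_between_canonicalOdd : ∀ k : Fin 4, ∀ x : ThetaChar 4, IsOddChar x →
    (∀ j < k, x ≠ canonicalOdd j) →
    (∀ i j, i < j → j < k → AzyTriple (canonicalOdd i) (canonicalOdd j) x) →
    ∃ w, IsOddChar w ∧
      ∀ j < k, AzyTriple (canonicalOdd j) x w ∧ AzyTriple (canonicalOdd j) w (canonicalOdd k) := by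
  decide +kernel

lemma exists_isParityAut_apply_eq_canonicalOdd (m : Fin 4 → ThetaChar 4)
    (hodd : ∀ i, IsOddChar (m i)) (hazy : AzySystem m) :
    ∀ k ≤ 4, ∃ τ, IsParityAut τ ∧ ∀ j : Fin 4, (j : ℕ) < k → τ (m j) = canonicalOdd j := by
  intro k hk
  induction k with
  | zero => exact ⟨1, IsParityAut.one, fun j hj => absurd hj (Nat.not_lt_zero _)⟩
  | succ k ih =>
    obtain ⟨τ, hτ, hτm⟩ := ih (by omega)
    set K : Fin 4 := ⟨k, by omega⟩
    have hx : IsOddChar (τ (m K)) := (hτ.qform_apply _).trans (hodd K)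
    have hx_ne (j) (hj : j < K) : τ (m K) ≠ canonicalOdd j := by
      rw [← hτm j hj]
      exact τ.injective.ne ((hazy.injective (by norm_num)).ne hj.ne')
    have hx_azy (i j) (hij : i < j) (hjK : j < K) :
        AzyTriple (canonicalOdd i) (canonicalOdd j) (τ (m K)) := by
      rw [← hτm i (hij.trans hjK), ← hτm j hjK, hτ.azyTriple_apply_iff]
      exact hazy i j K hij.ne hjK.ne (hij.trans hjK).ne
    obtain ⟨w, hw, hxw⟩ := exists_odd_between_canonicalOdd K _ hx hx_ne hx_azy
    obtain ⟨σ, hσ, hσx, hσF⟩ := exists_isParityAut_apply_eq (F := canonicalOdd '' {j | j < K})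
      (hx.trans hw.symm) (hw.trans (isOddChar_canonicalOdd K).symm)
      (by rintro _ ⟨j, hj, rfl⟩; exact (hxw j hj).1)
      (by rintro _ ⟨j, hj, rfl⟩; exact (hxw j hj).2)
    refine ⟨σ * τ, hσ.mul hτ, fun j hj => ?_⟩
    rcases (Nat.lt_succ_iff_lt_or_eq.mp hj) with hj | hj
    · rw [Equiv.Perm.mul_apply, hτm j hj]
      exact hσF _ ⟨j, hj, rfl⟩
    · rw [Equiv.Perm.mul_apply, show j = K from Fin.ext hj, hσx]

lemma exists_isParityAut_comp_eq_canonicalOdd (m : Fin 4 → ThetaChar 4)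
    (hodd : ∀ i, IsOddChar (m i)) (hazy : AzySystem m) :
    ∃ τ, IsParityAut τ ∧ ⇑τ ∘ m = canonicalOdd := by
  obtain ⟨τ, hτ, hτm⟩ := exists_isParityAut_apply_eq_canonicalOdd m hodd hazy 4 le_rfl
  exact ⟨τ, hτ, funext fun j => hτm j j.isLt⟩

def canonicalSixA : Finset (ThetaChar 4) :=
  {(![1, 0, 1, 0], ![1, 1, 1, 0]), (![0, 1, 1, 1], ![1, 1, 1, 0]), (![0, 1, 0, 1], ![1, 1, 0, 1]),
    (![1, 0, 1, 1], ![1, 1, 0, 1]), (![0, 1, 1, 0], ![1, 1, 1, 1]), (![1, 0, 0, 1], ![1, 1, 1, 1])}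

def canonicalSixB : Finset (ThetaChar 4) :=
  {(![0, 1, 1, 0], ![1, 1, 1, 0]), (![1, 0, 1, 1], ![1, 1, 1, 0]), (![1, 0, 0, 1], ![1, 1, 0, 1]),
    (![0, 1, 1, 1], ![1, 1, 0, 1]), (![1, 0, 1, 0], ![1, 1, 1, 1]), (![0, 1, 0, 1], ![1, 1, 1, 1])}

lemma canonicalSixA_mem_completions : canonicalSixA ∈ completions canonicalOdd 6 :=
  ⟨by decide +kernel, by decide +kernel, by decide +kernel, by decide +kernel, by decide +kernel,
    by decide +kernel⟩

lemma canonicalSixB_mem_completions : canonicalSixB ∈ completions canonicalOdd 6 :=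
  ⟨by decide +kernel, by decide +kernel, by decide +kernel, by decide +kernel, by decide +kernel,
    by decide +kernel⟩

set_option synthInstance.maxSize 4000 in
lemma mem_canonicalSixA_or_mem_canonicalSixB : ∀ c : ThetaChar 4, IsEvenChar c →
    (∀ i j, i ≠ j → AzyTriple (canonicalOdd i) (canonicalOdd j) c) →
    c ∈ canonicalSixA ∨ c ∈ canonicalSixB := by
  decide +kernel

set_option synthInstance.maxSize 4000 in
lemma not_azyTriple_canonicalSix : ∀ a ∈ canonicalSixA, ∀ b ∈ canonicalSixB, ∀ c,
    c ∈ canonicalSixA ∨ c ∈ canonicalSixB → c ≠ a → c ≠ b →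
    AzyTriple (canonicalOdd 0) a b → AzyTriple (canonicalOdd 0) a c →
    ¬AzyTriple (canonicalOdd 0) b c := by
  decide +kernel

lemma canonicalSixA_ne_canonicalSixB : canonicalSixA ≠ canonicalSixB := by decide

lemma completions_canonicalOdd :
    completions canonicalOdd 6 = {canonicalSixA, canonicalSixB} := by
  ext N
  refine ⟨fun ⟨hcard, heven, hfa⟩ => ?_, ?_⟩
  · have hsub (c) (hc : c ∈ N) : c ∈ canonicalSixA ∨ c ∈ canonicalSixB :=
      mem_canonicalSixA_or_mem_canonicalSixB c (heven c hc) fun i j hij => hfa.2.1 i j hij c hc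
    have hadj {a b} (ha : a ∈ N) (hb : b ∈ N) (hab : a ≠ b) : AzyTriple (canonicalOdd 0) a b :=
      hfa.2.2.1 0 a ha b hb hab
    by_cases hA : N ⊆ canonicalSixA
    · exact .inl (Finset.eq_of_subset_of_card_le hA (by rw [hcard]; decide))
    by_cases hB : N ⊆ canonicalSixB
    · exact .inr (Finset.eq_of_subset_of_card_le hB (by rw [hcard]; decide))
    obtain ⟨b, hbN, hbA⟩ := Finset.not_subset.mp hA
    obtain ⟨a, haN, haB⟩ := Finset.not_subset.mp hB
    have ha := (hsub a haN).resolve_right haB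
    have hb := (hsub b hbN).resolve_left hbA
    have hab : a ≠ b := fun h => haB (h ▸ hb)
    obtain ⟨c, hc, hcb⟩ := Finset.exists_mem_ne (s := N.erase a)
      (by rw [Finset.card_erase_of_mem haN, hcard]; decide) b
    obtain ⟨hca, hcN⟩ := Finset.mem_erase.mp hc
    exact (not_azyTriple_canonicalSix a ha b hb c (hsub c hcN) hca hcb (hadj haN hbN hab)
      (hadj haN hcN hca.symm) (hadj hbN hcN hcb.symm)).elim
  · rintro (rfl | rfl)
    exacts [canonicalSixA_mem_completions, canonicalSixB_mem_completions]

theorem card_special_fundamental_completions_genus_four_general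
    (m : Fin 4 → ThetaChar 4) (hodd : ∀ i, IsOddChar (m i))
    (hazy : AzySystem m) :
    Set.ncard {N : Finset (ThetaChar 4) |
        N.card = 6 ∧ (∀ c ∈ N, IsEvenChar c) ∧ FullyAzygetic m N} = 2 := by
  obtain ⟨τ, hτ, hτm⟩ := exists_isParityAut_comp_eq_canonicalOdd m hodd hazy
  change (completions m 6).ncard = 2
  rw [← hτ.ncard_completions_comp, hτm, completions_canonicalOdd,
    Set.ncard_pair canonicalSixA_ne_canonicalSixB]

/-- For `g = 4`: for every azygetic, essentially independent system `m₁, m₂, m₃, m₄`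
of odd theta characteristics, there are exactly `2` sets `N` of six even
characteristics such that `m₁, …, m₄, n₁, …, n₆` is a special fundamental system. -/
theorem card_special_fundamental_completions_genus_four
    (m : Fin 4 → ThetaChar 4) (hodd : ∀ i, IsOddChar (m i))
    (hazy : AzySystem m) (hind : EssInd m) :
    Set.ncard {N : Finset (ThetaChar 4) |
        N.card = 6 ∧ (∀ c ∈ N, IsEvenChar c) ∧ FullyAzygetic m N} = 2 :=
  card_special_fundamental_completions_genus_four_general m hodd hazy
end GenusFour
end

section
/- For g = 3: for every azygetic, essentially independent system m₁, m₂, m₃ of odd theta characteristics in 𝔽₂^3 × 𝔽₂^3, there is exactly 1 set N = {n₁, …, n₅} of five even characteristics such that m₁, m₂, m₃, n₁, …, n₅ is a special fundamental system. (This is the entry '1' for g = 3 in the table of the number of terms on the right-hand side of Fay's generalized Jacobi derivative identity.) -/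
/-! ### Auxiliary material -/

section Aux

/-- The polar (symplectic) form associated to `qform`. -/
def Bf (x y : ThetaChar 3) : ZMod 2 := qform (x + y) + qform x + qform y

lemma h2 : (2 : ZMod 2) = 0 := rfl

lemma qform_add_s12 (x y : ThetaChar 3) : qform (x + y) = qform x + qform y + Bf x y := by
  unfold Bf; linear_combination (-(qform x) - qform y) * h2

lemma Bf_eval (x y : ThetaChar 3) :
    Bf x y = x.1 0 * y.2 0 + y.1 0 * x.2 0 + (x.1 1 * y.2 1 + y.1 1 * x.2 1)
      + (x.1 2 * y.2 2 + y.1 2 * x.2 2) := by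
  simp only [Bf, qform, Fin.sum_univ_three, Prod.fst_add, Prod.snd_add, Pi.add_apply]
  linear_combination (x.1 0 * x.2 0 + x.1 1 * x.2 1 + x.1 2 * x.2 2
    + y.1 0 * y.2 0 + y.1 1 * y.2 1 + y.1 2 * y.2 2) * h2

lemma Bf_symm (x y : ThetaChar 3) : Bf x y = Bf y x := by rw [Bf_eval, Bf_eval]; ring

lemma Bf_add_left (x y z : ThetaChar 3) : Bf (x + y) z = Bf x z + Bf y z := by
  simp only [Bf_eval, Prod.fst_add, Prod.snd_add, Pi.add_apply]; ring

lemma Bf_self (x : ThetaChar 3) : Bf x x = 0 := by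
  rw [Bf_eval]; linear_combination (x.1 0 * x.2 0 + x.1 1 * x.2 1 + x.1 2 * x.2 2) * h2

lemma addself (x : ThetaChar 3) : x + x = 0 := by
  apply Prod.ext <;> funext i <;> exact CharTwo.add_self_eq_zero _

lemma azy_iff (x y z : ThetaChar 3) :
    AzyTriple x y z ↔ Bf x y + Bf x z + Bf y z = 1 := by
  have key : qform (x + y + z) + qform x + qform y + qform z
      = Bf x y + Bf x z + Bf y z := by
    rw [qform_add_s12 (x + y) z, qform_add_s12 x y, Bf_add_left]
    linear_combination (qform x + qform y + qform z) * h2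
  unfold AzyTriple
  rw [key]

/-! Fast boolean model on natural numbers. -/

def qb (n : ℕ) : Bool := ((150 >>> ((n >>> 3) &&& n &&& 7)) &&& 1) == 1

def Dlist (a b : ℕ) : List ℕ :=
  (List.range 64).filter (fun c => !qb c && qb (a ^^^ c) && qb (b ^^^ c))

def pcheck (l : List ℕ) : Bool :=
  (l.length == 6) && (l.all fun x => l.all fun y => l.all fun z =>
    (x == y) || (y == z) || (x == z) || qb (x ^^^ (y ^^^ z)))

def qcheck (l : List ℕ) : Bool :=
  match l with
  | [x0, x1, x2, x3, x4, x5] => pcheck [x0, x1, x2, x3, x4, x5]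
  | _ => false

def checkN : Bool :=
  (List.range 64).all fun a => (List.range 64).all fun b =>
    (qb (a ^^^ b) == xor (qb a) (qb b)) || qcheck (Dlist a b)

set_option maxRecDepth 100000 in
set_option maxHeartbeats 8000000 in
theorem checkN_true : checkN = true := by decide

lemma qcheck_imp (l : List ℕ) (h : qcheck l = true) : pcheck l = true := by
  rcases l with _ | ⟨a0, _ | ⟨a1, _ | ⟨a2, _ | ⟨a3, _ | ⟨a4, _ | ⟨a5, _ | ⟨a6, r⟩⟩⟩⟩⟩⟩⟩ <;>
    simp_all [qcheck]

lemma keyNat (a b : ℕ) (ha : a < 64) (hb : b < 64)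
    (h : qb (a ^^^ b) ≠ xor (qb a) (qb b)) : pcheck (Dlist a b) = true := by
  have hc := checkN_true
  unfold checkN at hc
  rw [List.all_eq_true] at hc
  have h1 := hc a (List.mem_range.mpr ha)
  rw [List.all_eq_true] at h1
  have hab := h1 b (List.mem_range.mpr hb)
  simp only [Bool.or_eq_true, beq_iff_eq] at hab
  rcases hab with hab | hab
  · exact absurd hab h
  · exact qcheck_imp _ hab

lemma pcheck_spec (l : List ℕ) (h : pcheck l = true) :
    l.length = 6 ∧ ∀ x ∈ l, ∀ y ∈ l, ∀ z ∈ l,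
      x ≠ y → y ≠ z → x ≠ z → qb (x ^^^ (y ^^^ z)) = true := by
  unfold pcheck at h
  simp only [Bool.and_eq_true, beq_iff_eq, List.all_eq_true, Bool.or_eq_true] at h
  obtain ⟨hlen, htr⟩ := h
  refine ⟨hlen, fun x hx y hy z hz hxy hyz hxz => ?_⟩
  have h3 := htr x hx y hy z hz
  tauto

/-! The bridge between `ThetaChar 3` and numbers below 64. -/

def tb (n i : ℕ) : ZMod 2 := if n.testBit i then 1 else 0

def dec (n : ℕ) : ThetaChar 3 := (![tb n 0, tb n 1, tb n 2], ![tb n 3, tb n 4, tb n 5])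

lemma tb_xor (a b i : ℕ) : tb (a ^^^ b) i = tb a i + tb b i := by
  unfold tb
  rw [Nat.testBit_xor]
  cases a.testBit i <;> cases b.testBit i <;> simp <;> decide

lemma dec_xor (a b : ℕ) : dec (a ^^^ b) = dec a + dec b := by
  unfold dec
  apply Prod.ext <;> funext i <;> fin_cases i <;>
    simp [tb_xor, Prod.fst_add, Prod.snd_add, Pi.add_apply]

set_option maxHeartbeats 1000000 in
lemma qform_dec : ∀ n : Fin 64, qform (dec n.val) = (bif qb n.val then 1 else 0) := by decide

lemma qform_dec' (n : ℕ) (h : n < 64) : qform (dec n) = (bif qb n then 1 else 0) :=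
  qform_dec ⟨n, h⟩

lemma qform_zero_iff (n : ℕ) (h : n < 64) : qform (dec n) = 0 ↔ qb n = false := by
  rw [qform_dec' n h]; cases qb n <;> simp <;> decide

lemma qform_one_iff (n : ℕ) (h : n < 64) : qform (dec n) = 1 ↔ qb n = true := by
  rw [qform_dec' n h]; cases qb n <;> simp <;> decide

set_option maxHeartbeats 4000000 in
lemma dec_inj : ∀ a b : Fin 64, dec a.val = dec b.val → a = b := by decide

lemma dec_surj : ∀ c : ThetaChar 3, ∃ n : Fin 64, dec n.val = c := by
  have hinj : Function.Injective (fun n : Fin 64 => dec n.val) := fun a b h => dec_inj a b h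
  have hcard : Fintype.card (Fin 64) = Fintype.card (ThetaChar 3) := by
    simp [ZMod.card]
  exact ((Fintype.bijective_iff_injective_and_card (fun n : Fin 64 => dec n.val)).mpr
    ⟨hinj, hcard⟩).2

/-- The candidate set for the completion. -/
def Dset (u v : ThetaChar 3) : Finset (ThetaChar 3) :=
  Finset.univ.filter fun c => qform c = 0 ∧ qform (u + c) = 1 ∧ qform (v + c) = 1

lemma mem_Dset (u v c : ThetaChar 3) :
    c ∈ Dset u v ↔ qform c = 0 ∧ qform (u + c) = 1 ∧ qform (v + c) = 1 := by
  simp [Dset]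

lemma xor_lt64 {x y : ℕ} (hx : x < 64) (hy : y < 64) : x ^^^ y < 64 :=
  Nat.xor_lt_two_pow (n := 6) hx hy

/-- The central finite fact, transferred to `ThetaChar 3`. -/
lemma key_main (u v : ThetaChar 3) (huv : qform (u + v) = qform u + qform v + 1) :
    (Dset u v).card = 6 ∧
    ∀ x ∈ Dset u v, ∀ y ∈ Dset u v, ∀ z ∈ Dset u v,
      x ≠ y → y ≠ z → x ≠ z → qform (x + y + z) = 1 := by
  obtain ⟨A, rfl⟩ := dec_surj u
  obtain ⟨B, rfl⟩ := dec_surj v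
  have hq1 : qform (dec A.val + dec B.val) = (bif qb (A.val ^^^ B.val) then 1 else 0) := by
    rw [← dec_xor]; exact qform_dec' _ (xor_lt64 A.isLt B.isLt)
  have hhyp : qb (A.val ^^^ B.val) ≠ xor (qb A.val) (qb B.val) := by
    intro hcontra
    rw [qform_dec' _ A.isLt, qform_dec' _ B.isLt, hq1, hcontra] at huv
    cases hA : qb A.val <;> cases hB : qb B.val <;> rw [hA, hB] at huv <;>
      exact absurd huv (by decide)
  have hp := keyNat A.val B.val A.isLt B.isLt hhyp
  obtain ⟨hlen, htri⟩ := pcheck_spec _ hp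
  have hmemD : ∀ n : ℕ, n < 64 →
      (dec n ∈ Dset (dec A.val) (dec B.val) ↔ n ∈ Dlist A.val B.val) := by
    intro n hn
    rw [mem_Dset]
    unfold Dlist
    rw [List.mem_filter, List.mem_range]
    have e1 : qform (dec A.val + dec n) = qform (dec (A.val ^^^ n)) := by rw [dec_xor]
    have e2 : qform (dec B.val + dec n) = qform (dec (B.val ^^^ n)) := by rw [dec_xor]
    rw [e1, e2, qform_zero_iff n hn, qform_one_iff _ (xor_lt64 A.isLt hn),
      qform_one_iff _ (xor_lt64 B.isLt hn)]
    constructor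
    · rintro ⟨hc0, hc1, hc2⟩
      exact ⟨hn, by simp [hc0, hc1, hc2]⟩
    · rintro ⟨-, hbool⟩
      simp only [Bool.and_eq_true, Bool.not_eq_true'] at hbool
      exact ⟨hbool.1.1, hbool.1.2, hbool.2⟩
  have hnodup : (Dlist A.val B.val).Nodup := List.Nodup.filter _ List.nodup_range
  have hmemlt : ∀ n ∈ Dlist A.val B.val, n < 64 := by
    intro n hn
    exact List.mem_range.mp (List.mem_filter.mp hn).1
  have hinj_on : ∀ x ∈ Dlist A.val B.val, ∀ y ∈ Dlist A.val B.val, dec x = dec y → x = y := by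
    intro x hx y hy he
    have h := dec_inj ⟨x, hmemlt x hx⟩ ⟨y, hmemlt y hy⟩ he
    exact congrArg Fin.val h
  have hmapnodup : ((Dlist A.val B.val).map dec).Nodup := hnodup.map_on hinj_on
  have hDeq : Dset (dec A.val) (dec B.val) = ((Dlist A.val B.val).map dec).toFinset := by
    ext c
    obtain ⟨n, rfl⟩ := dec_surj c
    rw [List.mem_toFinset, List.mem_map]
    constructor
    · intro hc
      exact ⟨n.val, (hmemD n.val n.isLt).mp hc, rfl⟩
    · rintro ⟨k, hk, he⟩
      have hk64 : k < 64 := hmemlt k hk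
      have : (⟨k, hk64⟩ : Fin 64) = n := dec_inj _ _ he
      have hkn : k = n.val := by rw [← this]
      rw [← hkn] at *
      exact (hmemD k hk64).mpr hk
  constructor
  · rw [hDeq, List.toFinset_card_of_nodup hmapnodup, List.length_map, hlen]
  · intro x hx y hy z hz hxy hyz hxz
    obtain ⟨nx, rfl⟩ := dec_surj x
    obtain ⟨ny, rfl⟩ := dec_surj y
    obtain ⟨nz, rfl⟩ := dec_surj z
    have hx' := (hmemD nx.val nx.isLt).mp hx
    have hy' := (hmemD ny.val ny.isLt).mp hy
    have hz' := (hmemD nz.val nz.isLt).mp hz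
    have hne1 : nx.val ≠ ny.val := fun h => hxy (by rw [h])
    have hne2 : ny.val ≠ nz.val := fun h => hyz (by rw [h])
    have hne3 : nx.val ≠ nz.val := fun h => hxz (by rw [h])
    have ht := htri nx.val hx' ny.val hy' nz.val hz' hne1 hne2 hne3
    have he : dec nx.val + dec ny.val + dec nz.val = dec (nx.val ^^^ (ny.val ^^^ nz.val)) := by
      rw [dec_xor, dec_xor, add_assoc]
    rw [he, qform_one_iff _ (xor_lt64 nx.isLt (xor_lt64 ny.isLt nz.isLt)), ht]

lemma Bf_add_right (x y z : ThetaChar 3) : Bf x (y + z) = Bf x y + Bf x z := by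
  rw [Bf_symm, Bf_add_left, Bf_symm y x, Bf_symm z x]

lemma azy_swap (x y z : ThetaChar 3) (h : AzyTriple x y z) : AzyTriple y x z := by
  unfold AzyTriple at h ⊢
  rw [show y + x + z = x + y + z from by abel]
  linear_combination h

end Aux

/-- For `g = 3`: for every azygetic, essentially independent system `m₁, m₂, m₃`
of odd theta characteristics, there is exactly `1` set `N` of five even
characteristics such that `m₁, m₂, m₃, n₁, …, n₅` is a special fundamental system. -/
theorem card_special_fundamental_completions_genus_three
    (m : Fin 3 → ThetaChar 3) (hodd : ∀ i, IsOddChar (m i))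
    (hazy : AzySystem m) (hind : EssInd m) :
    Set.ncard {N : Finset (ThetaChar 3) |
        N.card = 5 ∧ (∀ c ∈ N, IsEvenChar c) ∧ FullyAzygetic m N} = 1 := by
  have q0 : qform (m 0) = 1 := hodd 0
  have q1 : qform (m 1) = 1 := hodd 1
  have q2 : qform (m 2) = 1 := hodd 2
  have hB : Bf (m 0) (m 1) + Bf (m 0) (m 2) + Bf (m 1) (m 2) = 1 :=
    (azy_iff _ _ _).mp (hazy 0 1 2 (by decide) (by decide) (by decide))
  have cancel : ∀ x y : ThetaChar 3, x + (x + y) = y := fun x y => by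
    rw [← add_assoc, addself, zero_add]
  have huv : qform ((m 0 + m 1) + (m 0 + m 2))
      = qform (m 0 + m 1) + qform (m 0 + m 2) + 1 := by
    have e : (m 0 + m 1) + (m 0 + m 2) = (m 0 + m 0) + (m 1 + m 2) := by abel
    rw [e, addself, zero_add, qform_add_s12 (m 1) (m 2), qform_add_s12 (m 0) (m 1),
      qform_add_s12 (m 0) (m 2), q0, q1, q2]
    revert hB
    generalize Bf (m 0) (m 1) = a
    generalize Bf (m 0) (m 2) = b
    generalize Bf (m 1) (m 2) = c
    revert a b c; decide
  obtain ⟨hcard6, htriple⟩ := key_main _ _ huv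
  have hsq : qform (m 0 + m 1 + m 2) = 0 := by
    rw [qform_add_s12 (m 0 + m 1) (m 2), qform_add_s12 (m 0) (m 1), Bf_add_left, q0, q1, q2]
    revert hB
    generalize Bf (m 0) (m 1) = a
    generalize Bf (m 0) (m 2) = b
    generalize Bf (m 1) (m 2) = c
    revert a b c; decide
  have hsmem : (m 0 + m 1 + m 2) ∈ Dset (m 0 + m 1) (m 0 + m 2) := by
    rw [mem_Dset]
    refine ⟨hsq, ?_, ?_⟩
    · rw [show (m 0 + m 1) + (m 0 + m 1 + m 2) = m 2 from cancel _ _]; exact q2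
    · rw [show (m 0 + m 2) + (m 0 + m 1 + m 2) = m 1 from by
        rw [show m 0 + m 1 + m 2 = (m 0 + m 2) + m 1 from by abel]; exact cancel _ _]
      exact q1
  have memD : ∀ c, qform c = 0 →
      (c ∈ Dset (m 0 + m 1) (m 0 + m 2) ↔
        (Bf (m 0) c + Bf (m 1) c = 1 + Bf (m 0) (m 1)
          ∧ Bf (m 0) c + Bf (m 2) c = 1 + Bf (m 0) (m 2))) := by
    intro c h0
    rw [mem_Dset, qform_add_s12 (m 0 + m 1) c, qform_add_s12 (m 0 + m 2) c,
      qform_add_s12 (m 0) (m 1), qform_add_s12 (m 0) (m 2), Bf_add_left, Bf_add_left,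
      q0, q1, q2, h0]
    generalize Bf (m 0) (m 1) = a
    generalize Bf (m 0) (m 2) = b
    generalize Bf (m 0) c = x
    generalize Bf (m 1) c = y
    generalize Bf (m 2) c = z
    revert a b x y z; decide
  have hfacts : ∀ c ∈ Dset (m 0 + m 1) (m 0 + m 2), qform c = 0 ∧
      Bf (m 0) c + Bf (m 1) c = 1 + Bf (m 0) (m 1)
        ∧ Bf (m 0) c + Bf (m 2) c = 1 + Bf (m 0) (m 2) := by
    intro c hc
    have h0 : qform c = 0 := ((mem_Dset _ _ c).mp hc).1
    exact ⟨h0, (memD c h0).mp hc⟩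
  have hi3 : ∀ i : Fin 3, i = 0 ∨ i = 1 ∨ i = 2 := by decide
  set N0 := (Dset (m 0 + m 1) (m 0 + m 2)).erase (m 0 + m 1 + m 2) with hN0
  have hN0card : N0.card = 5 := by
    rw [hN0, Finset.card_erase_of_mem hsmem, hcard6]
  -- pairwise relation between two distinct members of N0
  have hpairrel : ∀ c ∈ N0, ∀ c' ∈ N0, c ≠ c' →
      Bf c c' + Bf (m 0) c + Bf (m 0) c' = 1 := by
    intro c hc c' hc' hne
    rw [hN0, Finset.mem_erase] at hc hc'
    obtain ⟨hcs, hcD⟩ := hc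
    obtain ⟨hc's, hc'D⟩ := hc'
    have ht := htriple c hcD c' hc'D (m 0 + m 1 + m 2) hsmem hne hc's hcs
    rw [qform_add_s12 (c + c') (m 0 + m 1 + m 2), qform_add_s12 c c',
      Bf_add_left c c' (m 0 + m 1 + m 2),
      Bf_add_right c (m 0 + m 1) (m 2), Bf_add_right c (m 0) (m 1),
      Bf_add_right c' (m 0 + m 1) (m 2), Bf_add_right c' (m 0) (m 1),
      Bf_symm c (m 0), Bf_symm c (m 1), Bf_symm c (m 2),
      Bf_symm c' (m 0), Bf_symm c' (m 1), Bf_symm c' (m 2),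
      hsq, ((mem_Dset _ _ c).mp hcD).1, ((mem_Dset _ _ c').mp hc'D).1] at ht
    obtain ⟨-, r1, r2⟩ := hfacts c hcD
    obtain ⟨-, r1', r2'⟩ := hfacts c' hc'D
    revert ht r1 r2 r1' r2'
    generalize Bf (m 0) (m 1) = a
    generalize Bf (m 0) (m 2) = b
    generalize Bf (m 0) c = x
    generalize Bf (m 1) c = y
    generalize Bf (m 2) c = z
    generalize Bf (m 0) c' = x'
    generalize Bf (m 1) c' = y'
    generalize Bf (m 2) c' = z'
    generalize Bf c c' = w
    revert a b x y z x' y' z' w; decide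
  have hN0good : (∀ c ∈ N0, IsEvenChar c) ∧ FullyAzygetic m N0 := by
    constructor
    · intro c hc
      exact (hfacts c (Finset.mem_of_mem_erase hc)).1
    refine ⟨hazy, ?_, ?_, ?_⟩
    · -- pairs of m's with one element of N0
      have base01 : ∀ c ∈ N0, AzyTriple (m 0) (m 1) c := by
        intro c hc
        obtain ⟨-, r1, r2⟩ := hfacts c (Finset.mem_of_mem_erase hc)
        rw [azy_iff]
        revert hB r1 r2
        generalize Bf (m 0) (m 1) = a
        generalize Bf (m 0) (m 2) = b
        generalize Bf (m 1) (m 2) = d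
        generalize Bf (m 0) c = x
        generalize Bf (m 1) c = y
        generalize Bf (m 2) c = z
        revert a b d x y z; decide
      have base02 : ∀ c ∈ N0, AzyTriple (m 0) (m 2) c := by
        intro c hc
        obtain ⟨-, r1, r2⟩ := hfacts c (Finset.mem_of_mem_erase hc)
        rw [azy_iff]
        revert hB r1 r2
        generalize Bf (m 0) (m 1) = a
        generalize Bf (m 0) (m 2) = b
        generalize Bf (m 1) (m 2) = d
        generalize Bf (m 0) c = x
        generalize Bf (m 1) c = y
        generalize Bf (m 2) c = z
        revert a b d x y z; decide
      have base12 : ∀ c ∈ N0, AzyTriple (m 1) (m 2) c := by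
        intro c hc
        obtain ⟨-, r1, r2⟩ := hfacts c (Finset.mem_of_mem_erase hc)
        rw [azy_iff]
        revert hB r1 r2
        generalize Bf (m 0) (m 1) = a
        generalize Bf (m 0) (m 2) = b
        generalize Bf (m 1) (m 2) = d
        generalize Bf (m 0) c = x
        generalize Bf (m 1) c = y
        generalize Bf (m 2) c = z
        revert a b d x y z; decide
      intro i j hij c hc
      rcases hi3 i with rfl | rfl | rfl <;> rcases hi3 j with rfl | rfl | rfl <;>
        first
          | exact absurd rfl hij
          | exact base01 c hc
          | exact base02 c hc
          | exact base12 c hc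
          | exact azy_swap _ _ _ (base01 c hc)
          | exact azy_swap _ _ _ (base02 c hc)
          | exact azy_swap _ _ _ (base12 c hc)
    · -- one m with two elements of N0
      intro i c hc c' hc' hne
      have hrel := hpairrel c hc c' hc' hne
      obtain ⟨-, r1, r2⟩ := hfacts c (Finset.mem_of_mem_erase hc)
      obtain ⟨-, r1', r2'⟩ := hfacts c' (Finset.mem_of_mem_erase hc')
      rcases hi3 i with rfl | rfl | rfl <;> rw [azy_iff] <;>
        [skip; skip; skip] <;>
        (revert hrel r1 r2 r1' r2'
         generalize Bf (m 0) (m 1) = a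
         generalize Bf (m 0) (m 2) = b
         generalize Bf (m 0) c = x
         generalize Bf (m 1) c = y
         generalize Bf (m 2) c = z
         generalize Bf (m 0) c' = x'
         generalize Bf (m 1) c' = y'
         generalize Bf (m 2) c' = z'
         generalize Bf c c' = w
         revert a b x y z x' y' z' w
         decide)
    · -- three elements of N0
      intro c hc c' hc' c'' hc'' h1 h2' h3'
      have hcD := Finset.mem_of_mem_erase hc
      have hc'D := Finset.mem_of_mem_erase hc'
      have hc''D := Finset.mem_of_mem_erase hc''
      have ht := htriple c hcD c' hc'D c'' hc''D h1 h2' h3'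
      rw [azy_iff]
      rw [qform_add_s12 (c + c') c'', qform_add_s12 c c', Bf_add_left c c' c'',
        ((mem_Dset _ _ c).mp hcD).1, ((mem_Dset _ _ c').mp hc'D).1,
        ((mem_Dset _ _ c'').mp hc''D).1] at ht
      revert ht
      generalize Bf c c' = a
      generalize Bf c c'' = b
      generalize Bf c' c'' = d
      revert a b d; decide
  have hback : ∀ N : Finset (ThetaChar 3),
      N.card = 5 → (∀ c ∈ N, IsEvenChar c) → FullyAzygetic m N → N = N0 := by
    intro N hcard heven hfull
    obtain ⟨-, hp2, hp3, -⟩ := hfull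
    have hsubD : ∀ c ∈ N, c ∈ Dset (m 0 + m 1) (m 0 + m 2) := by
      intro c hc
      have h0 : qform c = 0 := heven c hc
      have a01 := (azy_iff _ _ _).mp (hp2 0 1 (by decide) c hc)
      have a02 := (azy_iff _ _ _).mp (hp2 0 2 (by decide) c hc)
      refine (memD c h0).mpr ?_
      revert a01 a02
      generalize Bf (m 0) (m 1) = a
      generalize Bf (m 0) (m 2) = b
      generalize Bf (m 0) c = x
      generalize Bf (m 1) c = y
      generalize Bf (m 2) c = z
      revert a b x y z; decide
    have hsnotin : (m 0 + m 1 + m 2) ∉ N := by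
      intro hsN
      obtain ⟨c, hcN, hcs⟩ := Finset.exists_mem_ne
        (by rw [hcard]; norm_num) (m 0 + m 1 + m 2)
      have hAz := (azy_iff _ _ _).mp (hp3 0 (m 0 + m 1 + m 2) hsN c hcN (Ne.symm hcs))
      rw [Bf_add_right (m 0) (m 0 + m 1) (m 2), Bf_add_right (m 0) (m 0) (m 1), Bf_self,
        Bf_add_left (m 0 + m 1) (m 2) c, Bf_add_left (m 0) (m 1) c] at hAz
      obtain ⟨-, r1, r2⟩ := hfacts c (hsubD c hcN)
      revert hAz r1 r2
      generalize Bf (m 0) (m 1) = a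
      generalize Bf (m 0) (m 2) = b
      generalize Bf (m 0) c = x
      generalize Bf (m 1) c = y
      generalize Bf (m 2) c = z
      revert a b x y z; decide
    have hsub : N ⊆ N0 := by
      intro c hc
      rw [hN0, Finset.mem_erase]
      exact ⟨fun h => hsnotin (h ▸ hc), hsubD c hc⟩
    exact Finset.eq_of_subset_of_card_le hsub (by rw [hN0card, hcard])
  have hseteq : {N : Finset (ThetaChar 3) |
      N.card = 5 ∧ (∀ c ∈ N, IsEvenChar c) ∧ FullyAzygetic m N} = {N0} := by
    ext N
    simp only [Set.mem_setOf_eq, Set.mem_singleton_iff]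
    constructor
    · rintro ⟨hcard, heven, hfull⟩
      exact hback N hcard heven hfull
    · rintro rfl
      exact ⟨hN0card, hN0good.1, hN0good.2⟩
  rw [hseteq, Set.ncard_singleton]
end
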